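/- arXiv:2308.14239 — 2 statements merged into one kernel-verified Lean document; each statement's English description precedes it below -/
import Mathlib

section
/- Let A be a matrix, κ ≥ 1 its condition number, and let |b⟩, |b'⟩ be unit vectors with ‖|b⟩ − |b'⟩‖ ≤ δ/(2κ), where the singular values of A lie in [‖A‖/κ, ‖A‖]. If a unit vector |ψ⟩ satisfies ‖|ψ⟩ − A|b'⟩/‖A|b'⟩‖‖ ≤ δ/2, then ‖|ψ⟩ − A|b⟩/‖A|b⟩‖‖ ≤ δ. -/
/-!
For nonzero `x, y` in a real inner product space, expanding both squares gives
`‖x‖ ‖y‖ ‖x/‖x‖ - y/‖y‖‖² = ‖x - y‖² - (‖x‖ - ‖y‖)²`, so normalization is `1/c`-Lipschitz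
outside the ball of radius `c`. The lower singular-value bound keeps `A b` and `A b'` outside
the ball of radius `‖A‖/κ`, while `‖A b - A b'‖ ≤ ‖A‖ ‖b - b'‖`; hence the normalized images
are at distance at most `κ ‖b - b'‖ ≤ δ/2`, and the triangle inequality finishes.
-/

section Normalization

variable {E : Type*} [NormedAddCommGroup E] [InnerProductSpace ℝ E]

theorem norm_mul_norm_mul_norm_inv_smul_sub_sq (x y : E) :
    ‖x‖ * ‖y‖ * ‖‖x‖⁻¹ • x - ‖y‖⁻¹ • y‖ ^ 2 = ‖x - y‖ ^ 2 - (‖x‖ - ‖y‖) ^ 2 := by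
  rcases eq_or_ne x 0 with rfl | hx
  · simp
  rcases eq_or_ne y 0 with rfl | hy
  · simp
  have hx' : ‖x‖ ≠ 0 := norm_ne_zero_iff.mpr hx
  have hy' : ‖y‖ ≠ 0 := norm_ne_zero_iff.mpr hy
  rw [norm_sub_sq_real, norm_sub_sq_real, real_inner_smul_left, real_inner_smul_right,
    norm_smul, norm_smul, norm_inv, norm_norm, norm_inv, norm_norm]
  field_simp
  ring

theorem mul_norm_inv_norm_smul_sub_le {c : ℝ} (hc : 0 ≤ c) {x y : E} (hx : c ≤ ‖x‖)
    (hy : c ≤ ‖y‖) : c * ‖‖x‖⁻¹ • x - ‖y‖⁻¹ • y‖ ≤ ‖x - y‖ := by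
  refine le_of_pow_le_pow_left₀ two_ne_zero (norm_nonneg _) ?_
  calc (c * ‖‖x‖⁻¹ • x - ‖y‖⁻¹ • y‖) ^ 2
      = c * c * ‖‖x‖⁻¹ • x - ‖y‖⁻¹ • y‖ ^ 2 := by ring
    _ ≤ ‖x‖ * ‖y‖ * ‖‖x‖⁻¹ • x - ‖y‖⁻¹ • y‖ ^ 2 := by gcongr
    _ = ‖x - y‖ ^ 2 - (‖x‖ - ‖y‖) ^ 2 := norm_mul_norm_mul_norm_inv_smul_sub_sq x y
    _ ≤ ‖x - y‖ ^ 2 := sub_le_self _ (sq_nonneg _)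

end Normalization

theorem norm_inv_norm_smul_apply_sub_le {𝕜 E F : Type*} [NontriviallyNormedField 𝕜]
    [NormedAddCommGroup E] [NormedSpace 𝕜 E] [NormedAddCommGroup F] [InnerProductSpace ℝ F]
    [NormedSpace 𝕜 F] (A : E →L[𝕜] F) {κ : ℝ} (hκ : 0 < κ)
    (hsv : ∀ v, ‖A‖ / κ * ‖v‖ ≤ ‖A v‖) {b b' : E} (hb : ‖b‖ = 1) (hb' : ‖b'‖ = 1) :
    ‖‖A b‖⁻¹ • A b - ‖A b'‖⁻¹ • A b'‖ ≤ κ * ‖b - b'‖ := by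
  rcases eq_or_ne A 0 with rfl | hA
  · simpa using mul_nonneg hκ.le (norm_nonneg (b - b'))
  have hm : 0 < ‖A‖ / κ := div_pos (norm_pos_iff.mpr hA) hκ
  have hAb : ‖A‖ / κ ≤ ‖A b‖ := by simpa [hb] using hsv b
  have hAb' : ‖A‖ / κ ≤ ‖A b'‖ := by simpa [hb'] using hsv b'
  refine le_of_mul_le_mul_left ?_ hm
  calc ‖A‖ / κ * ‖‖A b‖⁻¹ • A b - ‖A b'‖⁻¹ • A b'‖
      ≤ ‖A b - A b'‖ := mul_norm_inv_norm_smul_sub_le hm.le hAb hAb'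
    _ = ‖A (b - b')‖ := by rw [map_sub]
    _ ≤ ‖A‖ * ‖b - b'‖ := A.le_opNorm _
    _ = ‖A‖ / κ * (κ * ‖b - b'‖) := by field_simp

theorem stmt11_general (N : ℕ) (A : EuclideanSpace ℂ (Fin N) →L[ℂ] EuclideanSpace ℂ (Fin N))
    (κ : ℝ) (hκ : 1 ≤ κ)
    (hsv : ∀ v : EuclideanSpace ℂ (Fin N), (‖A‖ / κ) * ‖v‖ ≤ ‖A v‖)
    (δ : ℝ)
    (b b' ψ : EuclideanSpace ℂ (Fin N))
    (hb : ‖b‖ = 1) (hb' : ‖b'‖ = 1)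
    (hclose : ‖b - b'‖ ≤ δ / (2 * κ))
    (happrox : ‖ψ - ‖A b'‖⁻¹ • A b'‖ ≤ δ / 2) :
    ‖ψ - ‖A b‖⁻¹ • A b‖ ≤ δ := by
  let _ : InnerProductSpace ℝ (EuclideanSpace ℂ (Fin N)) := InnerProductSpace.rclikeToReal ℂ _
  have hκ₀ : 0 < κ := zero_lt_one.trans_le hκ
  have hnormalized : ‖‖A b'‖⁻¹ • A b' - ‖A b‖⁻¹ • A b‖ ≤ δ / 2 :=
    calc _ ≤ κ * ‖b' - b‖ := norm_inv_norm_smul_apply_sub_le A hκ₀ hsv hb' hb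
      _ ≤ κ * (δ / (2 * κ)) := by rw [norm_sub_rev]; gcongr
      _ = δ / 2 := by field_simp
  calc ‖ψ - ‖A b‖⁻¹ • A b‖
      ≤ ‖ψ - ‖A b'‖⁻¹ • A b'‖ + ‖‖A b'‖⁻¹ • A b' - ‖A b‖⁻¹ • A b‖ :=
        norm_sub_le_norm_sub_add_norm_sub _ _ _
    _ ≤ δ / 2 + δ / 2 := add_le_add happrox hnormalized
    _ = δ := add_halves δ

/-- Let `A` be an invertible operator on `ℂ^N` whose singular values lie in
`[‖A‖/κ, ‖A‖]` (equivalently, `(‖A‖/κ)·‖v‖ ≤ ‖A v‖` for all `v`), `κ ≥ 1`, and let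
`b, b'` be unit vectors with `‖b − b'‖ ≤ δ/(2κ)` for some `δ ∈ (0,1]`. If a unit
vector `ψ` satisfies `‖ψ − A b'/‖A b'‖‖ ≤ δ/2`, then `‖ψ − A b/‖A b‖‖ ≤ δ`. -/
theorem stmt11 (N : ℕ) (A : EuclideanSpace ℂ (Fin N) →L[ℂ] EuclideanSpace ℂ (Fin N))
    (hA : Function.Bijective A) (κ : ℝ) (hκ : 1 ≤ κ)
    (hsv : ∀ v : EuclideanSpace ℂ (Fin N), (‖A‖ / κ) * ‖v‖ ≤ ‖A v‖)
    (δ : ℝ) (hδ : 0 < δ) (hδ1 : δ ≤ 1)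
    (b b' ψ : EuclideanSpace ℂ (Fin N))
    (hb : ‖b‖ = 1) (hb' : ‖b'‖ = 1) (hψ : ‖ψ‖ = 1)
    (hclose : ‖b - b'‖ ≤ δ / (2 * κ))
    (happrox : ‖ψ - ‖A b'‖⁻¹ • A b'‖ ≤ δ / 2) :
    ‖ψ - ‖A b‖⁻¹ • A b‖ ≤ δ :=
  stmt11_general N A κ hκ hsv δ b b' ψ hb hb' hclose happrox
end

section
/- Let A be an invertible matrix with singular values in [‖A‖/κ, ‖A‖] for some κ ≥ 1, and let |b⟩, |b'⟩ be unit vectors. Then ‖A|b⟩/‖A|b⟩‖ − A|b'⟩/‖A|b'⟩‖‖ ≤ 2κ‖|b⟩ − |b'⟩‖. -/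
lemma abs_inv_sub_inv_mul_self {a b : ℝ} (ha : 0 < a) (hb : 0 < b) :
    |a⁻¹ - b⁻¹| * b = a⁻¹ * |b - a| := by
  calc |a⁻¹ - b⁻¹| * b = |(a⁻¹ - b⁻¹) * b| := by rw [abs_mul, abs_of_pos hb]
    _ = |a⁻¹ * (b - a)| := by congr 1; field_simp
    _ = a⁻¹ * |b - a| := by rw [abs_mul, abs_of_pos (inv_pos.mpr ha)]

lemma norm_inv_smul_sub_inv_smul_le {E : Type*} [NormedAddCommGroup E] [NormedSpace ℝ E]
    {x : E} (hx : x ≠ 0) (y : E) :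
    ‖‖x‖⁻¹ • x - ‖y‖⁻¹ • y‖ ≤ 2 * ‖x - y‖ / ‖x‖ := by
  rcases eq_or_ne y 0 with rfl | hy
  · have hxn : ‖x‖ ≠ 0 := norm_ne_zero_iff.mpr hx
    rw [norm_zero, inv_zero, zero_smul, sub_zero, sub_zero, norm_smul, norm_inv, norm_norm,
      inv_mul_cancel₀ hxn, mul_div_assoc, div_self hxn]
    norm_num
  have hxn : 0 < ‖x‖ := norm_pos_iff.mpr hx
  calc ‖‖x‖⁻¹ • x - ‖y‖⁻¹ • y‖
      ≤ ‖‖x‖⁻¹ • x - ‖x‖⁻¹ • y‖ + ‖‖x‖⁻¹ • y - ‖y‖⁻¹ • y‖ := norm_sub_le_norm_sub_add_norm_sub _ _ _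
    _ = ‖x‖⁻¹ * ‖x - y‖ + ‖x‖⁻¹ * |‖y‖ - ‖x‖| := by
        rw [← smul_sub, ← sub_smul, norm_smul, norm_smul, Real.norm_of_nonneg (inv_pos.mpr hxn).le,
          Real.norm_eq_abs, abs_inv_sub_inv_mul_self hxn (norm_pos_iff.mpr hy)]
    _ ≤ ‖x‖⁻¹ * ‖x - y‖ + ‖x‖⁻¹ * ‖x - y‖ := by
        gcongr
        rw [norm_sub_rev x y]
        exact abs_norm_sub_norm_le y x
    _ = 2 * ‖x - y‖ / ‖x‖ := by ring

theorem stmt12_general (N : ℕ) (A : EuclideanSpace ℂ (Fin N) →L[ℂ] EuclideanSpace ℂ (Fin N))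
    (κ : ℝ) (hκ : 1 ≤ κ)
    (hsv : ∀ v : EuclideanSpace ℂ (Fin N), (‖A‖ / κ) * ‖v‖ ≤ ‖A v‖)
    (b b' : EuclideanSpace ℂ (Fin N)) (hb : ‖b‖ = 1) :
    ‖‖A b‖⁻¹ • A b - ‖A b'‖⁻¹ • A b'‖ ≤ 2 * κ * ‖b - b'‖ := by
  have hκ0 : 0 < κ := one_pos.trans_le hκ
  rcases (norm_nonneg A).eq_or_lt with hA0 | hA0
  · simp only [norm_eq_zero.mp hA0.symm, zero_apply, norm_zero, inv_zero,
      smul_zero, sub_self]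
    positivity
  have hlow : ‖A‖ / κ ≤ ‖A b‖ := by simpa [hb] using hsv b
  have hAb : A b ≠ 0 := norm_pos_iff.mp ((div_pos hA0 hκ0).trans_le hlow)
  calc ‖‖A b‖⁻¹ • A b - ‖A b'‖⁻¹ • A b'‖
      ≤ 2 * ‖A b - A b'‖ / ‖A b‖ := norm_inv_smul_sub_inv_smul_le hAb _
    _ ≤ 2 * (‖A‖ * ‖b - b'‖) / (‖A‖ / κ) := by
        gcongr
        rw [← map_sub]
        exact A.le_opNorm _
    _ = 2 * κ * ‖b - b'‖ := by field_simp

/-- Let `A` be an invertible operator on `ℂ^N` with singular values in `[‖A‖/κ, ‖A‖]`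
for some `κ ≥ 1` (equivalently, `(‖A‖/κ)·‖v‖ ≤ ‖A v‖` for all `v`). Then for unit
vectors `b, b'`, `‖A b/‖A b‖ − A b'/‖A b'‖‖ ≤ 2κ·‖b − b'‖`. -/
theorem stmt12 (N : ℕ) (A : EuclideanSpace ℂ (Fin N) →L[ℂ] EuclideanSpace ℂ (Fin N))
    (hA : Function.Bijective A) (κ : ℝ) (hκ : 1 ≤ κ)
    (hsv : ∀ v : EuclideanSpace ℂ (Fin N), (‖A‖ / κ) * ‖v‖ ≤ ‖A v‖)
    (b b' : EuclideanSpace ℂ (Fin N)) (hb : ‖b‖ = 1) (hb' : ‖b'‖ = 1) :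
    ‖‖A b‖⁻¹ • A b - ‖A b'‖⁻¹ • A b'‖ ≤ 2 * κ * ‖b - b'‖ :=
  stmt12_general N A κ hκ hsv b b' hb
end
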